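/- Let φ be an orthonormal N-frame, η ∈ T_φ, and R := (φ+η)·(I_N + ⟦η,η⟧)^{-1/2}. Then for every orthonormal N-frame ξ : Fin N → H₀ one has ‖R − (φ+η)‖_H ≤ ‖ξ − (φ+η)‖_H; that is, the polar-decomposition-based retraction is a nearest-point projection of φ+η onto the set of orthonormal N-frames with respect to the H-norm. -/

import Mathlib

open scoped RealInnerProductSpace

/-- The outer product `⟦v,w⟧ ∈ ℝ^{N×N}` of two tuples, with entries `⟨v i, w j⟩`. -/
noncomputable def outerProd {N : ℕ} {H₀ : Type*} [NormedAddCommGroup H₀]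
    [InnerProductSpace ℝ H₀] (v w : Fin N → H₀) : Matrix (Fin N) (Fin N) ℝ :=
  Matrix.of fun i j => ⟪v i, w j⟫

/-- Multiplication of a tuple by a matrix from the right: `(vS)_j = Σ_i S_{ij} v_i`. -/
def smulMat {N : ℕ} {H₀ : Type*} [AddCommGroup H₀] [Module ℝ H₀]
    (v : Fin N → H₀) (S : Matrix (Fin N) (Fin N) ℝ) : Fin N → H₀ :=
  fun j => ∑ i, S i j • v i

/-- The inner product `(v,w)_H = Σ_j ⟨v_j, w_j⟩ = tr⟦v,w⟧`. -/
noncomputable def innerH {N : ℕ} {H₀ : Type*} [NormedAddCommGroup H₀]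
    [InnerProductSpace ℝ H₀] (v w : Fin N → H₀) : ℝ :=
  ∑ j, ⟪v j, w j⟫

/-- The `H`-norm `‖v‖_H = (Σ_j ⟨v_j, v_j⟩)^{1/2}` of a tuple. -/
noncomputable def normH {N : ℕ} {H₀ : Type*} [NormedAddCommGroup H₀]
    [InnerProductSpace ℝ H₀] (v : Fin N → H₀) : ℝ :=
  Real.sqrt (innerH v v)

/-!
Write `v = φ + η`. The tangency of `η` gives `⟦v,v⟧ = I + ⟦η,η⟧ = S²`, so `w := vS⁻¹` is an
orthonormal frame with `v = wS` and `(w,v)_H = tr S`. For an orthonormal frame `ξ` one has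
`‖ξ - v‖_H² = N - 2 (ξ,v)_H + ‖v‖_H²`, so it suffices that `(ξ,v)_H ≤ tr S`. With `T = S^{1/2}`,
`(ξ, wS)_H = (ξT, wT)_H ≤ ‖ξT‖_H ‖wT‖_H = tr S` by Cauchy–Schwarz in `H`, since right
multiplication of an orthonormal frame by `T` has squared `H`-norm `tr(TᵀT) = tr S`.
-/

open Matrix
open scoped MatrixOrder

section smulMat

variable {N : ℕ} {H₀ : Type*} [AddCommGroup H₀] [Module ℝ H₀]

lemma smulMat_one (v : Fin N → H₀) : smulMat v 1 = v := by
  funext j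
  simp [smulMat, one_apply, ite_smul]

lemma smulMat_smulMat (v : Fin N → H₀) (A B : Matrix (Fin N) (Fin N) ℝ) :
    smulMat (smulMat v A) B = smulMat v (A * B) := by
  funext j
  simp only [smulMat, mul_apply, Finset.smul_sum, Finset.sum_smul, smul_smul]
  rw [Finset.sum_comm]
  exact Finset.sum_congr rfl fun k _ => Finset.sum_congr rfl fun i _ => by rw [mul_comm]

end smulMat

section outerProd

variable {N : ℕ} {H₀ : Type*} [NormedAddCommGroup H₀] [InnerProductSpace ℝ H₀]

lemma outerProd_add_left (u v w : Fin N → H₀) :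
    outerProd (u + v) w = outerProd u w + outerProd v w := by
  ext i j; simp [outerProd, inner_add_left]

lemma outerProd_add_right (u v w : Fin N → H₀) :
    outerProd u (v + w) = outerProd u v + outerProd u w := by
  ext i j; simp [outerProd, inner_add_right]

lemma outerProd_smulMat_left (v w : Fin N → H₀) (A : Matrix (Fin N) (Fin N) ℝ) :
    outerProd (smulMat v A) w = Aᵀ * outerProd v w := by
  ext i j
  simp [outerProd, smulMat, mul_apply, sum_inner, real_inner_smul_left]

lemma outerProd_smulMat_right (v w : Fin N → H₀) (A : Matrix (Fin N) (Fin N) ℝ) :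
    outerProd v (smulMat w A) = outerProd v w * A := by
  ext i j
  simp [outerProd, smulMat, mul_apply, inner_sum, real_inner_smul_right, mul_comm]

lemma outerProd_self_posSemidef (v : Fin N → H₀) : (outerProd v v).PosSemidef :=
  posSemidef_gram ℝ v

lemma outerProd_add_self_of_tangent {φ η : Fin N → H₀} (hφ : outerProd φ φ = 1)
    (hη : outerProd η φ + outerProd φ η = 0) :
    outerProd (φ + η) (φ + η) = 1 + outerProd η η := by
  rw [outerProd_add_left, outerProd_add_right, outerProd_add_right, hφ,
    eq_neg_of_add_eq_zero_right hη]
  abel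

lemma innerH_eq_trace (v w : Fin N → H₀) : innerH v w = (outerProd v w).trace := rfl

lemma innerH_eq_inner (v w : Fin N → H₀) :
    innerH v w = ⟪WithLp.toLp 2 v, WithLp.toLp 2 w⟫ := by
  simp [innerH, PiLp.inner_apply]

lemma normH_eq_norm (v : Fin N → H₀) : normH v = ‖WithLp.toLp 2 v‖ := by
  rw [normH, innerH_eq_inner, real_inner_self_eq_norm_sq, Real.sqrt_sq (norm_nonneg _)]

lemma innerH_smulMat_right (v w : Fin N → H₀) (A : Matrix (Fin N) (Fin N) ℝ) :
    innerH v (smulMat w A) = innerH (smulMat v Aᵀ) w := by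
  rw [innerH_eq_trace, innerH_eq_trace, outerProd_smulMat_right, outerProd_smulMat_left,
    transpose_transpose, trace_mul_comm]

end outerProd

section frame

variable {N : ℕ} {H₀ : Type*} [NormedAddCommGroup H₀] [InnerProductSpace ℝ H₀]

lemma innerH_self_of_frame {ξ : Fin N → H₀} (hξ : outerProd ξ ξ = 1) : innerH ξ ξ = N := by
  simp [innerH_eq_trace, hξ]

lemma normH_smulMat_of_frame {ξ : Fin N → H₀} (hξ : outerProd ξ ξ = 1)
    (A : Matrix (Fin N) (Fin N) ℝ) : normH (smulMat ξ A) = √(Aᵀ * A).trace := by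
  rw [normH, innerH_eq_trace, outerProd_smulMat_left, outerProd_smulMat_right, hξ, Matrix.one_mul]

lemma innerH_smulMat_le_trace {ξ w : Fin N → H₀} (hξ : outerProd ξ ξ = 1)
    (hw : outerProd w w = 1) {S : Matrix (Fin N) (Fin N) ℝ} (hS : S.PosSemidef) :
    innerH ξ (smulMat w S) ≤ S.trace := by
  set T := CFC.sqrt S
  have hTT : T * T = S := CFC.sqrt_mul_sqrt_self S hS.nonneg
  have hTsymm : Tᵀ = T := by
    simpa using (CFC.sqrt_nonneg S).posSemidef.isHermitian.eq
  have htrace : (Tᵀ * T).trace = S.trace := by rw [hTsymm, hTT]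
  calc innerH ξ (smulMat w S) = innerH (smulMat ξ T) (smulMat w T) := by
        rw [← hTT, ← smulMat_smulMat, innerH_smulMat_right, hTsymm]
    _ ≤ normH (smulMat ξ T) * normH (smulMat w T) := by
        rw [innerH_eq_inner, normH_eq_norm, normH_eq_norm]
        exact real_inner_le_norm _ _
    _ = S.trace := by
        rw [normH_smulMat_of_frame hξ, normH_smulMat_of_frame hw, htrace,
          Real.mul_self_sqrt hS.trace_nonneg]

lemma normH_sub_le_of_innerH_le {ξ w : Fin N → H₀} (hξ : outerProd ξ ξ = 1)
    (hw : outerProd w w = 1) {v : Fin N → H₀} (h : innerH ξ v ≤ innerH w v) :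
    normH (w - v) ≤ normH (ξ - v) := by
  have hξ' := innerH_self_of_frame hξ
  have hw' := innerH_self_of_frame hw
  rw [innerH_eq_inner, real_inner_self_eq_norm_sq] at hξ' hw'
  simp only [innerH_eq_inner] at h
  rw [normH_eq_norm, normH_eq_norm, WithLp.toLp_sub, WithLp.toLp_sub,
    ← sq_le_sq₀ (norm_nonneg _) (norm_nonneg _), norm_sub_sq_real, norm_sub_sq_real, hξ', hw']
  linarith

lemma outerProd_smulMat_inv_self {v : Fin N → H₀} {S : Matrix (Fin N) (Fin N) ℝ}
    (hS : Sᵀ = S) (hdet : IsUnit S.det) (hv : outerProd v v = S * S) :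
    outerProd (smulMat v S⁻¹) (smulMat v S⁻¹) = 1 := by
  rw [outerProd_smulMat_left, outerProd_smulMat_right, hv, transpose_nonsing_inv, hS,
    Matrix.mul_assoc, mul_nonsing_inv S hdet, Matrix.mul_one, nonsing_inv_mul S hdet]

lemma innerH_smulMat_inv_self {v : Fin N → H₀} {S : Matrix (Fin N) (Fin N) ℝ}
    (hS : Sᵀ = S) (hdet : IsUnit S.det) (hv : outerProd v v = S * S) :
    innerH (smulMat v S⁻¹) v = S.trace := by
  rw [innerH_eq_trace, outerProd_smulMat_left, hv, transpose_nonsing_inv, hS,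
    ← Matrix.mul_assoc, nonsing_inv_mul S hdet, Matrix.one_mul]

end frame

theorem polar_retraction_is_projection_general {N : ℕ} {H₀ : Type*}
    [NormedAddCommGroup H₀] [InnerProductSpace ℝ H₀]
    (φ η : Fin N → H₀) (hφ : outerProd φ φ = 1)
    (hη : outerProd η φ + outerProd φ η = 0)
    (S : Matrix (Fin N) (Fin N) ℝ) (hS : S.PosSemidef)
    (hSsq : S * S = 1 + outerProd η η) :
    ∀ ξ : Fin N → H₀, outerProd ξ ξ = 1 →
      normH (smulMat (φ + η) S⁻¹ - (φ + η)) ≤ normH (ξ - (φ + η)) := by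
  intro ξ hξ
  have hv : outerProd (φ + η) (φ + η) = S * S := by
    rw [outerProd_add_self_of_tangent hφ hη, hSsq]
  have hSsymm : Sᵀ = S := by simpa using hS.isHermitian.eq
  have hdet : IsUnit S.det := (isUnit_iff_isUnit_det S).mp <| isUnit_of_mul_isUnit_left <| by
    rw [hSsq]; exact (PosDef.one.add_posSemidef (outerProd_self_posSemidef η)).isUnit
  have hw := outerProd_smulMat_inv_self hSsymm hdet hv
  refine normH_sub_le_of_innerH_le hξ hw ?_
  calc innerH ξ (φ + η) = innerH ξ (smulMat (smulMat (φ + η) S⁻¹) S) := by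
        rw [smulMat_smulMat, nonsing_inv_mul S hdet, smulMat_one]
    _ ≤ S.trace := innerH_smulMat_le_trace hξ hw hS
    _ = innerH (smulMat (φ + η) S⁻¹) (φ + η) := (innerH_smulMat_inv_self hSsymm hdet hv).symm

/-- the polar-decomposition-based retraction
`R = (φ+η)·(I + ⟦η,η⟧)^{-1/2}` is a nearest-point projection of `φ+η` onto the set of
orthonormal `N`-frames with respect to the `H`-norm. The square root `(I + ⟦η,η⟧)^{1/2}`
is represented by the (unique) symmetric positive semidefinite matrix `S` with
`S * S = I + ⟦η,η⟧`. -/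
theorem polar_retraction_is_projection {N : ℕ} (hN : 1 ≤ N) {H₀ : Type*}
    [NormedAddCommGroup H₀] [InnerProductSpace ℝ H₀]
    (φ η : Fin N → H₀) (hφ : outerProd φ φ = 1)
    (hη : outerProd η φ + outerProd φ η = 0)
    (S : Matrix (Fin N) (Fin N) ℝ) (hS : S.PosSemidef)
    (hSsq : S * S = 1 + outerProd η η) :
    ∀ ξ : Fin N → H₀, outerProd ξ ξ = 1 →
      normH (smulMat (φ + η) S⁻¹ - (φ + η)) ≤ normH (ξ - (φ + η)) :=
  polar_retraction_is_projection_general φ η hφ hη S hS hSsq
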